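/- arXiv:1801.05164 — 2 statements merged into one kernel-verified Lean document; each statement's English description precedes it below -/
import Mathlib

section
/- Let A = {a,b} and θ the anti-automorphism exchanging a and b. The set X = {a², ab, a²b, ab², b²} is a finite complete θ-invariant code which is neither prefix nor suffix. -/
open List

/-- The submonoid of the free monoid `A*` (words as lists) generated by `S`:
all concatenations of finitely many words of `S`. -/
def wordStar {A : Type*} (S : Set (List A)) : Set (List A) :=
  {w | ∃ l : List (List A), (∀ x ∈ l, x ∈ S) ∧ l.flatten = w}

/-- `X` is a (variable-length) code: every equation among words of `X` is trivial. -/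
def isCodeL {A : Type*} (X : Set (List A)) : Prop :=
  ∀ l m : List (List A), (∀ w ∈ l, w ∈ X) → (∀ w ∈ m, w ∈ X) → l.flatten = m.flatten → l = m

/-- `θ` is an (anti-)automorphism of the free monoid `A*`: a bijection fixing the
empty word which is either a morphism or an anti-morphism. -/
def isAAA {A : Type*} (θ : List A → List A) : Prop :=
  Function.Bijective θ ∧ θ [] = [] ∧
    ((∀ u v : List A, θ (u ++ v) = θ u ++ θ v) ∨
     (∀ u v : List A, θ (u ++ v) = θ v ++ θ u))

/-- `M` is a submonoid of the free monoid `A*`. -/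
def isSubmonoidL {A : Type*} (M : Set (List A)) : Prop :=
  [] ∈ M ∧ ∀ u ∈ M, ∀ v ∈ M, u ++ v ∈ M

/-- The minimal generating set `(M∖{ε}) ∖ (M∖{ε})²` of a submonoid `M` of `A*`. -/
def mgsL {A : Type*} (M : Set (List A)) : Set (List A) :=
  (M \ {[]}) \ {w | ∃ u ∈ M \ ({[]} : Set (List A)), ∃ v ∈ M \ ({[]} : Set (List A)), w = u ++ v}

/-- `M` is a free submonoid of `A*`: it is generated by its minimal generating
set, which is a code. -/
def isFreeSubmonoidL {A : Type*} (M : Set (List A)) : Prop :=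
  isSubmonoidL M ∧ isCodeL (mgsL M) ∧ M = wordStar (mgsL M)

/-- `X` is complete: every word is a factor of some word of `X*`. -/
def isCompleteL {A : Type*} (X : Set (List A)) : Prop :=
  ∀ w : List A, ∃ u v : List A, u ++ w ++ v ∈ wordStar X

/-- `X` is a prefix code: `X ∩ XA⁺ = ∅`. -/
def isPrefixCodeL {A : Type*} (X : Set (List A)) : Prop :=
  ∀ x ∈ X, ∀ y ∈ X, x <+: y → x = y

/-- `X` is a suffix code: `X ∩ A⁺X = ∅`. -/
def isSuffixCodeL {A : Type*} (X : Set (List A)) : Prop :=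
  ∀ x ∈ X, ∀ y ∈ X, x <:+ y → x = y

/-!
Write `a = true`, `b = false`.

*Code.* The first two letters of a word of `X` determine it, except that `a²` is a prefix of
`a²b` and `ab` of `ab²`. Hence two factorizations of the same word either agree in their first
factor or exhibit words `u, v ∈ X*` with `u = b v`. The latter is impossible: a word of `X*`
starting with `b` starts with `b²`, so `u = b² u'` and `v = b u'`, and the roles of `u` and `v`
swap with shorter words.

*Completeness.* Every word `a w b` lies in `X*`: it splits into blocks `aᵖ b^q` with
`p, q ≥ 1` (formally, induct on `w` for the words `aᵖ b^q w b`), and each block lies in `X*`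
since `a², b² ∈ X` reduce `p, q` to `1` or `2`, where `ab, a²b, ab², a²·b²` do.
-/

section WordStar

variable {A : Type*} {S : Set (List A)} {u v x : List A}

theorem mem_wordStar_of_mem (hx : x ∈ S) : x ∈ wordStar S :=
  ⟨[x], by simpa using hx, by simp⟩

theorem append_mem_wordStar (hu : u ∈ wordStar S) (hv : v ∈ wordStar S) :
    u ++ v ∈ wordStar S := by
  obtain ⟨l, hl, rfl⟩ := hu
  obtain ⟨m, hm, rfl⟩ := hv
  refine ⟨l ++ m, fun x hx => ?_, by simp⟩
  rcases List.mem_append.1 hx with h | h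
  exacts [hl x h, hm x h]

end WordStar

def exampleCode : Set (List Bool) :=
  {[true, true], [true, false], [true, true, false], [true, false, false], [false, false]}

theorem mem_exampleCode {x : List Bool} :
    x ∈ exampleCode ↔ x = [true, true] ∨ x = [true, false] ∨ x = [true, true, false] ∨
      x = [true, false, false] ∨ x = [false, false] := by
  simp [exampleCode]

theorem exampleCode_flatten_ne_false_cons_flatten {l m : List (List Bool)}
    (hl : ∀ x ∈ l, x ∈ exampleCode) (hm : ∀ y ∈ m, y ∈ exampleCode) :
    l.flatten ≠ false :: m.flatten := by
  induction l generalizing m with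
  | nil => simp
  | cons x l ih =>
    intro h
    rcases mem_exampleCode.1 (hl x mem_cons_self) with rfl | rfl | rfl | rfl | rfl <;>
      simp only [flatten_cons, cons_append, nil_append, cons.injEq, Bool.true_eq_false,
        false_and, true_and] at h
    cases m with
    | nil => simp at h
    | cons y m =>
      rcases mem_exampleCode.1 (hm y mem_cons_self) with rfl | rfl | rfl | rfl | rfl <;>
        simp only [flatten_cons, cons_append, nil_append, cons.injEq, Bool.false_eq_true,
          false_and, true_and] at h
      exact ih (fun x hx => hl x (mem_cons_of_mem _ hx))
        (fun y hy => hm y (mem_cons_of_mem _ hy)) h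

theorem exampleCode_eq_of_append_flatten_eq {x y : List Bool} {l m : List (List Bool)}
    (hx : x ∈ exampleCode) (hy : y ∈ exampleCode)
    (hl : ∀ x ∈ l, x ∈ exampleCode) (hm : ∀ y ∈ m, y ∈ exampleCode)
    (h : x ++ l.flatten = y ++ m.flatten) : x = y := by
  have hlm := exampleCode_flatten_ne_false_cons_flatten hl hm
  have hml := exampleCode_flatten_ne_false_cons_flatten hm hl
  rcases mem_exampleCode.1 hx with rfl | rfl | rfl | rfl | rfl <;>
    rcases mem_exampleCode.1 hy with rfl | rfl | rfl | rfl | rfl <;>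
    simp only [cons_append, nil_append, cons.injEq, Bool.false_eq_true, Bool.true_eq_false,
      true_and, false_and, and_false, and_self, cons_ne_self, ne_cons_self] at h ⊢
  all_goals first | exact hlm h | exact hml h.symm

theorem nil_notMem_exampleCode : [] ∉ exampleCode := by
  simp [exampleCode]

theorem exampleCode_isCode : isCodeL exampleCode := by
  intro l m hl hm h
  induction l generalizing m with
  | nil =>
    cases m with
    | nil => rfl
    | cons y m =>
      have hy : y = [] := flatten_eq_nil_iff.1 h.symm y mem_cons_self
      exact absurd (hm y mem_cons_self) (hy ▸ nil_notMem_exampleCode)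
  | cons x l ih =>
    have hl' : ∀ w ∈ l, w ∈ exampleCode := fun w hw => hl w (mem_cons_of_mem _ hw)
    cases m with
    | nil =>
      have hx : x = [] := flatten_eq_nil_iff.1 h x mem_cons_self
      exact absurd (hl x mem_cons_self) (hx ▸ nil_notMem_exampleCode)
    | cons y m =>
      have hm' : ∀ w ∈ m, w ∈ exampleCode := fun w hw => hm w (mem_cons_of_mem _ hw)
      rw [flatten_cons, flatten_cons] at h
      obtain rfl :=
        exampleCode_eq_of_append_flatten_eq (hl x mem_cons_self) (hm y mem_cons_self) hl' hm' h
      rw [ih m hl' hm' (append_cancel_left h)]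

theorem replicate_append_replicate_mem_wordStar_exampleCode :
    ∀ p q : ℕ, 0 < p → 0 < q →
      replicate p true ++ replicate q false ∈ wordStar exampleCode
  | p + 3, q, _, hq => by
    have := append_mem_wordStar
      (mem_wordStar_of_mem (show [true, true] ∈ exampleCode by simp [exampleCode]))
      (replicate_append_replicate_mem_wordStar_exampleCode (p + 1) q (by omega) hq)
    simpa [replicate_succ] using this
  | p, q + 3, hp, _ => by
    have := append_mem_wordStar
      (replicate_append_replicate_mem_wordStar_exampleCode p (q + 1) hp (by omega))
      (mem_wordStar_of_mem (show [false, false] ∈ exampleCode by simp [exampleCode]))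
    simpa [replicate_succ'] using this
  | 1, 1, _, _ | 1, 2, _, _ | 2, 1, _, _ => mem_wordStar_of_mem (by simp [exampleCode])
  | 2, 2, _, _ => append_mem_wordStar (S := exampleCode) (u := [true, true]) (v := [false, false])
      (mem_wordStar_of_mem (by simp [exampleCode])) (mem_wordStar_of_mem (by simp [exampleCode]))

theorem replicate_append_replicate_append_mem_wordStar_exampleCode (w : List Bool) :
    ∀ p q : ℕ, 0 < p →
      replicate p true ++ replicate q false ++ w ++ [false] ∈ wordStar exampleCode := by
  induction w with
  | nil =>
    intro p q hp
    simpa [← replicate_succ'] using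
      replicate_append_replicate_mem_wordStar_exampleCode p (q + 1) hp q.succ_pos
  | cons c w ih =>
    intro p q hp
    cases c with
    | false => simpa [replicate_succ'] using ih p (q + 1) hp
    | true =>
      rcases Nat.eq_zero_or_pos q with rfl | hq
      · simpa [replicate_succ'] using ih (p + 1) 0 p.succ_pos
      · simpa using append_mem_wordStar
          (replicate_append_replicate_mem_wordStar_exampleCode p q hp hq) (ih 1 0 one_pos)

theorem exampleCode_isComplete : isCompleteL exampleCode :=
  fun w => ⟨[true], [false], by
    simpa using replicate_append_replicate_append_mem_wordStar_exampleCode w 1 0 one_pos⟩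

theorem exampleCode_image_reverse_map_not_subset :
    (fun w => w.reverse.map (fun c => !c)) '' exampleCode ⊆ exampleCode := by
  rintro _ ⟨x, hx, rfl⟩
  rcases mem_exampleCode.1 hx with rfl | rfl | rfl | rfl | rfl <;> simp [exampleCode]

theorem exampleCode_not_isPrefixCode : ¬ isPrefixCodeL exampleCode := fun h => by
  simpa using h [true, true] (by simp [exampleCode]) [true, true, false] (by simp [exampleCode])
    ⟨[false], rfl⟩

theorem exampleCode_not_isSuffixCode : ¬ isSuffixCodeL exampleCode := fun h => by
  simpa using h [false, false] (by simp [exampleCode]) [true, false, false] (by simp [exampleCode])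
    ⟨[true], rfl⟩

/-- Over `A = {a, b}` (here `a = true`, `b = false`) with θ the anti-automorphism
exchanging the letters, `X = {a², ab, a²b, ab², b²}` is a finite complete
θ-invariant code which is neither prefix nor suffix. -/
theorem stmt11 (θ : List Bool → List Bool)
    (hθ : θ = fun w => (w.reverse).map (fun c => !c))
    (X : Set (List Bool))
    (hX : X = {[true, true], [true, false], [true, true, false],
               [true, false, false], [false, false]}) :
    X.Finite ∧ isCodeL X ∧ isCompleteL X ∧ θ '' X ⊆ X ∧
    ¬ isPrefixCodeL X ∧ ¬ isSuffixCodeL X := by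
  obtain rfl : X = exampleCode := hX
  subst hθ
  exact ⟨by simp [exampleCode], exampleCode_isCode, exampleCode_isComplete,
    exampleCode_image_reverse_map_not_subset, exampleCode_not_isPrefixCode,
    exampleCode_not_isSuffixCode⟩
end

section
/- Let A = {a,b} and let θ be the mirror anti-automorphism (θ(a)=a, θ(b)=b, θ reverses words). The θ-invariant bifix code X = {aa, b} cannot be embedded in any finite complete bifix code over A: there is no finite complete bifix code Z with X ⊆ Z. -/
open List

/- A finite complete set `Z` of words contains a word `b^i a b^j`: cut `b^N a b^N`, with `N`
bounding the lengths in `Z`, along a factorization in `Z*`; the block holding the `a` is too short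
to reach beyond the `b`s. If `Z` is moreover bifix and contains `b`, then `i = j = 0`, because
otherwise `b` would be a proper prefix or suffix of that word. Hence `Z` contains the letter `a`,
which is a proper prefix of `aa`. -/

namespace List

variable {α : Type*}

theorem exists_mem_of_flatten_eq_append_cons {l : List (List α)} {P S : List α} {x : α}
    (h : l.flatten = P ++ x :: S) :
    ∃ z ∈ l, ∃ p s, z = p ++ x :: s ∧ p <:+ P ∧ s <+: S := by
  rcases flatten_eq_append_iff.mp h with
    ⟨as, bs, rfl, rfl, hbs⟩ | ⟨as, bs, c, cs, ds, rfl, rfl, hc⟩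
  · obtain ⟨_, bs', cs, rfl, -, rfl⟩ := flatten_eq_cons_iff.mp hbs.symm
    exact ⟨x :: bs', by simp, [], bs', rfl, nil_suffix, prefix_append _ _⟩
  · obtain ⟨rfl, rfl⟩ := cons_eq_cons.mp hc
    exact ⟨bs ++ x :: cs, by simp, bs, cs, rfl, suffix_append _ _, prefix_append _ _⟩

end List

open List

section Codes

variable {A : Type*}

lemma isCodeL_of_isPrefixCodeL {X : Set (List A)} (hX : isPrefixCodeL X) (hnil : [] ∉ X) :
    isCodeL X := by
  have eq_nil_of_flatten_eq_nil {l : List (List A)} (hl : ∀ w ∈ l, w ∈ X)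
      (h : l.flatten = []) : l = [] := by
    cases l with
    | nil => rfl
    | cons w _ => exact absurd (flatten_eq_nil_iff.mp h w (by simp) ▸ hl w (by simp)) hnil
  intro l
  induction l with
  | nil => exact fun m _ hm h => (eq_nil_of_flatten_eq_nil hm h.symm).symm
  | cons w l ih =>
    rintro (_ | ⟨w', m⟩) hl hm h
    · exact eq_nil_of_flatten_eq_nil hl h
    simp only [mem_cons, forall_eq_or_imp] at hl hm
    rw [flatten_cons, flatten_cons] at h
    obtain rfl : w = w' := by
      rcases append_eq_append_iff.mp h with ⟨c, hc, -⟩ | ⟨c, hc, -⟩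
      · exact hX w hl.1 w' hm.1 ⟨c, hc.symm⟩
      · exact (hX w' hm.1 w hl.1 ⟨c, hc.symm⟩).symm
    rw [ih m hl.2 hm.2 (append_cancel_left h)]

lemma exists_replicate_append_cons_replicate_mem {Z : Set (List A)} (hfin : Z.Finite)
    (hcomp : isCompleteL Z) (a b : A) : ∃ i j, replicate i b ++ a :: replicate j b ∈ Z := by
  obtain ⟨N, hN⟩ := (hfin.image length).bddAbove
  obtain ⟨u, v, l, hl, hflat⟩ := hcomp (replicate N b ++ a :: replicate N b)
  have hsplit : l.flatten = (u ++ replicate N b) ++ a :: (replicate N b ++ v) := by simp [hflat]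
  obtain ⟨z, hz, p, s, rfl, hp, hs⟩ := exists_mem_of_flatten_eq_append_cons hsplit
  have hlen : p.length + s.length + 1 ≤ N := by
    simpa [Nat.add_assoc] using hN ⟨_, hl _ hz, rfl⟩
  obtain ⟨i, -, rfl⟩ := sublist_replicate_iff.mp
    (suffix_of_suffix_length_le hp (suffix_append _ _) (by simp; omega)).sublist
  obtain ⟨j, -, rfl⟩ := sublist_replicate_iff.mp
    (prefix_of_prefix_length_le hs (prefix_append _ _) (by simp; omega)).sublist
  exact ⟨i, j, hl _ hz⟩

lemma singleton_mem_of_isCompleteL {Z : Set (List A)} (hfin : Z.Finite) (hcomp : isCompleteL Z)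
    (hpre : isPrefixCodeL Z) (hsuf : isSuffixCodeL Z) {b : A} (hb : [b] ∈ Z) (a : A) :
    [a] ∈ Z := by
  obtain ⟨i, j, hz⟩ := exists_replicate_append_cons_replicate_mem hfin hcomp a b
  rcases i with _ | i
  · rcases j with _ | j
    · simpa using hz
    have hbz := hsuf _ hb _ hz ⟨a :: replicate j b, by simp [replicate_succ']⟩
    simpa using congrArg length hbz
  · have hbz := hpre _ hb _ hz ⟨replicate i b ++ a :: replicate j b, by simp [replicate_succ]⟩
    have hlen := congrArg length hbz
    simp only [length_append, length_replicate, length_cons, length_nil] at hlen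
    omega

end Codes

/-- Over `A = {a, b}` (here `a = true`, `b = false`) with the mirror
anti-automorphism θ (word reversal), the θ-invariant bifix code `X = {aa, b}`
cannot be embedded into any finite complete bifix code. -/
theorem stmt13 (θ : List Bool → List Bool) (hθ : θ = fun w => w.reverse)
    (X : Set (List Bool)) (hX : X = {[true, true], [false]}) :
    (θ '' X ⊆ X ∧ isCodeL X ∧ isPrefixCodeL X ∧ isSuffixCodeL X) ∧
    ¬ ∃ Z : Set (List Bool), Z.Finite ∧ isCodeL Z ∧ isPrefixCodeL Z ∧
        isSuffixCodeL Z ∧ isCompleteL Z ∧ X ⊆ Z := by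
  subst hθ hX
  have hpre : isPrefixCodeL ({[true, true], [false]} : Set (List Bool)) := by
    rintro x (rfl | rfl) y (rfl | rfl) h <;> first | rfl | exact absurd h (by decide)
  have hsuf : isSuffixCodeL ({[true, true], [false]} : Set (List Bool)) := by
    rintro x (rfl | rfl) y (rfl | rfl) h <;> first | rfl | exact absurd h (by decide)
  refine ⟨⟨?_, isCodeL_of_isPrefixCodeL hpre (by simp), hpre, hsuf⟩, ?_⟩
  · rintro _ ⟨x, (rfl | rfl), rfl⟩ <;> simp
  rintro ⟨Z, hfin, -, hpreZ, hsufZ, hcomp, hXZ⟩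
  have hb : [false] ∈ Z := hXZ (by simp)
  have ha : [true] ∈ Z := singleton_mem_of_isCompleteL hfin hcomp hpreZ hsufZ hb true
  exact absurd (hpreZ _ ha _ (hXZ (by simp)) ⟨[true], rfl⟩) (by decide)
end
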